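/- arXiv:1206.2676 — 5 statements merged into one kernel-verified Lean document; each statement's English description precedes it below -/
import Mathlib

section
/- Let G be a group generated by elements x₁,…,x_s, let u : G → ℤ be a group homomorphism, and let E ⊆ G be a finite nonempty subset such that u(g) = 1 for all g ∈ E and E is closed under conjugation (γ⁻¹gγ ∈ E for all g ∈ E, γ ∈ G). Fix t ∈ E. Then ker(u) is generated by the finite set {xᵢ t^{-u(xᵢ)} : 1 ≤ i ≤ s} ∪ {xᵢ⁻¹ t^{u(xᵢ)} : 1 ≤ i ≤ s} ∪ {g_j g_k⁻¹ : g_j, g_k ∈ E}. In particular ker(u) is finitely generated. -/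
/-!
Let `H` be the subgroup generated by the proposed finite set. It lies in `ker u`, and conjugation
by `t` preserves it: conjugating a generator `y t^m` by `t^{±1}` multiplies it on the left by
`t (y t y⁻¹)⁻¹` or `t⁻¹ (y t y⁻¹)`, and both are quotients of elements of `E`. Hence
`g ↦ g t^{-u g}` sends the generators of `G` into `H`, and the identities
`a b t^{-u(ab)} = (a t^{-u a}) · t^{u a} (b t^{-u b}) t^{-u a}` and
`a⁻¹ t^{u a} = t^{-u a} (a t^{-u a})⁻¹ t^{u a}` show it sends all of `G` into `H`.
On `ker u` this map is the identity.
-/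

open Subgroup

namespace Subgroup

variable {G : Type*} [Group G]

theorem mem_normalizer_closure_of_conj_mem {S : Set G} {g : G}
    (h : ∀ s ∈ S, g * s * g⁻¹ ∈ closure S) (h' : ∀ s ∈ S, g⁻¹ * s * g ∈ closure S) :
    g ∈ normalizer (closure S : Set G) := by
  rw [mem_normalizer_iff_map_conj_eq, MonoidHom.map_closure]
  refine le_antisymm ((closure_le _).2 ?_) ?_
  · rintro _ ⟨s, hs, rfl⟩
    exact h s hs
  · rw [closure_le, ← MonoidHom.map_closure]
    exact fun s hs ↦ ⟨_, h' s hs, by simp [mul_assoc]⟩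

end Subgroup

section IntegerCharacter

variable {G : Type*} [Group G] (u : G →* Multiplicative ℤ) {H : Subgroup G} {t : G}

theorem mul_zpow_neg_mem_of_mem_normalizer {X : Set G} (hX : closure X = ⊤)
    (ht : t ∈ normalizer (H : Set G)) (hXH : ∀ x ∈ X, x * t ^ (-(u x).toAdd) ∈ H) (g : G) :
    g * t ^ (-(u g).toAdd) ∈ H := by
  have conj_mem (m : ℤ) {h : G} (hh : h ∈ H) : t ^ m * h * (t ^ m)⁻¹ ∈ H :=
    (mem_normalizer_iff.1 (zpow_mem ht m) h).1 hh
  have hg : g ∈ closure X := hX ▸ mem_top g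
  induction hg using Subgroup.closure_induction with
  | mem x hx => exact hXH x hx
  | one => simp
  | mul a b _ _ ha hb =>
    convert mul_mem ha (conj_mem (u a).toAdd hb) using 1
    simp only [map_mul, toAdd_mul]
    group
  | inv a _ ha =>
    convert conj_mem (-(u a).toAdd) (inv_mem ha) using 1
    simp only [map_inv, toAdd_inv]
    group

theorem ker_le_of_mem_normalizer {X : Set G} (hX : closure X = ⊤)
    (ht : t ∈ normalizer (H : Set G)) (hXH : ∀ x ∈ X, x * t ^ (-(u x).toAdd) ∈ H) : u.ker ≤ H :=
  fun g hg ↦ by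
    simpa [(MonoidHom.mem_ker).1 hg] using mul_zpow_neg_mem_of_mem_normalizer u hX ht hXH g

end IntegerCharacter

section KernelGenerators

variable {G : Type*} [Group G] {ι : Type*}

def kernelGenerators (x : ι → G) (u : G →* Multiplicative ℤ) (E : Set G) (t : G) : Set G :=
  (Set.range fun i => x i * t ^ (-(u (x i)).toAdd)) ∪
    (Set.range fun i => (x i)⁻¹ * t ^ (u (x i)).toAdd) ∪
    {w : G | ∃ gj ∈ E, ∃ gk ∈ E, w = gj * gk⁻¹}

variable (x : ι → G) (u : G →* Multiplicative ℤ) {E : Set G} {t : G}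

theorem kernelGenerators_finite [Finite ι] (hE : E.Finite) : (kernelGenerators x u E t).Finite :=
  ((Set.finite_range _).union (Set.finite_range _)).union <|
    (hE.image2 (fun a b ↦ a * b⁻¹) hE).subset fun _ ⟨a, ha, b, hb, hw⟩ ↦ ⟨a, ha, b, hb, hw.symm⟩

theorem closure_kernelGenerators_le_ker (hu1 : ∀ g ∈ E, u g = Multiplicative.ofAdd 1)
    (ht : t ∈ E) : closure (kernelGenerators x u E t) ≤ u.ker := by
  rw [closure_le]
  rintro _ ((⟨i, rfl⟩ | ⟨i, rfl⟩) | ⟨a, ha, b, hb, rfl⟩)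
  · simp [hu1 t ht, ← ofAdd_zsmul]
  · simp [hu1 t ht, ← ofAdd_zsmul]
  · simp [hu1 a ha, hu1 b hb]

theorem mem_normalizer_closure_kernelGenerators (hconj : ∀ g ∈ E, ∀ γ : G, γ⁻¹ * g * γ ∈ E)
    (ht : t ∈ E) : t ∈ normalizer (closure (kernelGenerators x u E t) : Set G) := by
  set S := kernelGenerators x u E t
  have hconj' : ∀ g ∈ E, ∀ γ : G, γ * g * γ⁻¹ ∈ E := fun g hg γ ↦ by simpa using hconj g hg γ⁻¹
  have quot_mem {a b : G} (ha : a ∈ E) (hb : b ∈ E) : a * b⁻¹ ∈ closure S :=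
    subset_closure (Or.inr ⟨a, ha, b, hb, rfl⟩)
  have of_twisted {y : G} {m : ℤ} (hy : y * t * y⁻¹ ∈ E) (hs : y * t ^ m ∈ closure S) :
      t * (y * t ^ m) * t⁻¹ ∈ closure S ∧ t⁻¹ * (y * t ^ m) * t ∈ closure S := by
    constructor
    · convert mul_mem (quot_mem ht hy) hs using 1
      group
    · convert mul_mem (quot_mem (hconj _ hy t) ht) hs using 1
      group
  have conj_mem : ∀ s ∈ S, t * s * t⁻¹ ∈ closure S ∧ t⁻¹ * s * t ∈ closure S := by
    rintro s ((⟨i, rfl⟩ | ⟨i, rfl⟩) | ⟨a, ha, b, hb, rfl⟩)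
    · exact of_twisted (hconj' t ht (x i)) (subset_closure (Or.inl (Or.inl ⟨i, rfl⟩)))
    · exact of_twisted (by simpa using hconj t ht (x i)) (subset_closure (Or.inl (Or.inr ⟨i, rfl⟩)))
    · constructor
      · convert quot_mem (hconj' a ha t) (hconj' b hb t) using 1
        group
      · convert quot_mem (hconj a ha t) (hconj b hb t) using 1
        group
  exact mem_normalizer_closure_of_conj_mem (fun s hs ↦ (conj_mem s hs).1)
    (fun s hs ↦ (conj_mem s hs).2)

end KernelGenerators

theorem stmt3_general {G : Type*} [Group G] (s : ℕ) (x : Fin s → G)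
    (hgen : Subgroup.closure (Set.range x) = ⊤)
    (u : G →* Multiplicative ℤ)
    (E : Finset G)
    (hu1 : ∀ g ∈ E, u g = Multiplicative.ofAdd 1)
    (hconj : ∀ g ∈ E, ∀ γ : G, γ⁻¹ * g * γ ∈ E)
    (t : G) (ht : t ∈ E) :
    u.ker = Subgroup.closure
      ((Set.range fun i => x i * t ^ (-(u (x i)).toAdd)) ∪
       (Set.range fun i => (x i)⁻¹ * t ^ (u (x i)).toAdd) ∪
       {w : G | ∃ gj ∈ E, ∃ gk ∈ E, w = gj * gk⁻¹}) ∧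
    (u.ker : Subgroup G).FG := by
  have hker : u.ker = closure (kernelGenerators x u E t) :=
    le_antisymm
      (ker_le_of_mem_normalizer u hgen (mem_normalizer_closure_kernelGenerators x u hconj ht)
        (by rintro _ ⟨i, rfl⟩; exact subset_closure (Or.inl (Or.inl ⟨i, rfl⟩))))
      (closure_kernelGenerators_le_ker x u hu1 ht)
  exact ⟨hker, (Subgroup.fg_iff _).2
    ⟨_, hker.symm, kernelGenerators_finite x u E.finite_toSet⟩⟩

/-- If `G` is generated by `x 1, …, x s`, `u : G → ℤ` is a homomorphism, and
`E` is a finite nonempty conjugation-invariant subset with `u ≡ 1` on `E`,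
then for any fixed `t ∈ E`, `ker u` is generated by the finite set
`{xᵢ t^{-u xᵢ}} ∪ {xᵢ⁻¹ t^{u xᵢ}} ∪ {g h⁻¹ : g, h ∈ E}`;
in particular `ker u` is finitely generated. -/
theorem stmt3 {G : Type*} [Group G] (s : ℕ) (x : Fin s → G)
    (hgen : Subgroup.closure (Set.range x) = ⊤)
    (u : G →* Multiplicative ℤ)
    (E : Finset G) (hE : E.Nonempty)
    (hu1 : ∀ g ∈ E, u g = Multiplicative.ofAdd 1)
    (hconj : ∀ g ∈ E, ∀ γ : G, γ⁻¹ * g * γ ∈ E)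
    (t : G) (ht : t ∈ E) :
    u.ker = Subgroup.closure
      ((Set.range fun i => x i * t ^ (-(u (x i)).toAdd)) ∪
       (Set.range fun i => (x i)⁻¹ * t ^ (u (x i)).toAdd) ∪
       {w : G | ∃ gj ∈ E, ∃ gk ∈ E, w = gj * gk⁻¹}) ∧
    (u.ker : Subgroup G).FG :=
  stmt3_general s x hgen u E hu1 hconj t ht
end

section
/- Let G be a group, u : G → ℤ a homomorphism, and E ⊆ G a finite conjugation-invariant subset with u(g) = 1 for all g ∈ E. Suppose K = ker(u) is a surface group of genus at least 2 (in particular, K has trivial virtual center: no finite-index subgroup of K has nontrivial center, and every nontrivial element of K has centralizer of infinite index in G whenever its centralizer in K is of infinite index). If t ∈ E has centralizer of finite index in G and g ∈ E with g ≠ t, then h = g t⁻¹ is a nontrivial element of K whose centralizer in K has finite index in K. Hence if K is the fundamental group of a closed orientable surface of genus ≥ 2, then E has exactly one element. -/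
/-! For `g ≠ t` in `E`, the element `g * t⁻¹` is a nontrivial element of `ker u` (as `u g = u t`)
that commutes with the finite-index subgroup `C(g) ∩ C(t)`, so its centralizer in `ker u`
has finite index, which the surface-group hypothesis forbids. -/

namespace Subgroup

variable {G : Type*} [Group G]

theorem centralizer_inf_le_centralizer_mul_inv (g t : G) :
    centralizer {g} ⊓ centralizer {t} ≤ centralizer {g * t⁻¹} := by
  intro x hx
  obtain ⟨hg, ht⟩ := mem_inf.1 hx
  rw [mem_centralizer_singleton_iff] at hg ht ⊢
  exact (Commute.mul_right hg (Commute.inv_right ht) : Commute x (g * t⁻¹))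

theorem centralizer_subgroupOf_singleton (H : Subgroup G) (h : H) :
    (centralizer {(h : G)}).subgroupOf H = centralizer {h} := by
  ext x
  simp [mem_subgroupOf, mem_centralizer_singleton_iff, Subtype.ext_iff]

theorem FiniteIndex.centralizer_mul_inv {g t : G} (hg : (centralizer {g}).FiniteIndex)
    (ht : (centralizer {t}).FiniteIndex) : (centralizer {g * t⁻¹}).FiniteIndex :=
  finiteIndex_of_le (centralizer_inf_le_centralizer_mul_inv g t)

end Subgroup

theorem stmt4_general {G : Type*} [Group G] (u : G →* Multiplicative ℤ)
    (E : Finset G)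
    (hu1 : ∀ g ∈ E, u g = Multiplicative.ofAdd 1)
    (hcent : ∀ g ∈ E, (Subgroup.centralizer {g}).FiniteIndex)
    (hK : ∀ h : u.ker, h ≠ 1 →
      ¬ (Subgroup.centralizer {h} : Subgroup u.ker).FiniteIndex)
    (t : G) (ht : t ∈ E) :
    E = {t} := by
  refine Finset.eq_singleton_iff_unique_mem.2 ⟨ht, fun g hg => ?_⟩
  by_contra hne
  have hker : g * t⁻¹ ∈ u.ker := by simp [hu1 g hg, hu1 t ht]
  refine hK ⟨g * t⁻¹, hker⟩ (by simpa [Subtype.ext_iff, mul_inv_eq_one] using hne) ?_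
  rw [← Subgroup.centralizer_subgroupOf_singleton]
  have hfin := (hcent g hg).centralizer_mul_inv (hcent t ht)
  infer_instance

/-- Let `u : G → ℤ` be a homomorphism and `E` a finite conjugation-invariant subset
with `u ≡ 1` on `E`, all of whose elements have centralizer of finite index in `G`.
Suppose the kernel `K = ker u` has the property of a surface group of genus at least 2:
no nontrivial element of `K` has a centralizer of finite index in `K`.
Then `E` has exactly one element: `E = {t}` for the given `t ∈ E`. -/
theorem stmt4 {G : Type*} [Group G] (u : G →* Multiplicative ℤ)
    (E : Finset G)
    (hu1 : ∀ g ∈ E, u g = Multiplicative.ofAdd 1)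
    (hconj : ∀ g ∈ E, ∀ γ : G, γ⁻¹ * g * γ ∈ E)
    (hcent : ∀ g ∈ E, (Subgroup.centralizer {g}).FiniteIndex)
    (hK : ∀ h : u.ker, h ≠ 1 →
      ¬ (Subgroup.centralizer {h} : Subgroup u.ker).FiniteIndex)
    (t : G) (ht : t ∈ E) :
    E = {t} :=
  stmt4_general u E hu1 hcent hK t ht
end

section
/- Let 1 → ℤ² → G → ℤ → 1 be a group extension, with ℤ² = ker(u) for u : G → ℤ, generated by commuting elements h₁, h₂. Suppose t ∈ G satisfies: for some positive integer m, h₁^m t = t h₁^m, and t h₁ t⁻¹ ∈ ker(u). If ker(u) ≅ ℤ² is torsion-free abelian, then t commutes with h₁. Consequently, if the same holds for h₂, then t centralizes ker(u) and G ≅ ℤ × ℤ² via (n, h) ↦ tⁿ h whenever u(t) = 1. -/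
/-!
Conjugation by `t` maps `h₁` to `h := t h₁ t⁻¹ ∈ ker u`, and `h ^ m = t h₁ ^ m t⁻¹ = h₁ ^ m`.
Since `ker u` is abelian, `(h h₁⁻¹) ^ m = h ^ m h₁ ^ (-m) = 1`, and torsion-freeness gives
`h = h₁`. Once `t` commutes with both generators it centralizes `ker u`, and as `u t`
generates `ℤ`, every `g` factors uniquely as `t ^ n * k` with `n = u g` and `k ∈ ker u`.
-/

section Extension

variable {G : Type*} [Group G]

theorem Subgroup.eq_of_pow_eq_of_torsionFree {K : Subgroup G}
    (hab : ∀ a ∈ K, ∀ b ∈ K, Commute a b) (htf : ∀ k ∈ K, ∀ n : ℕ, 0 < n → k ^ n = 1 → k = 1)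
    {a b : G} (ha : a ∈ K) (hb : b ∈ K) {n : ℕ} (hn : 0 < n) (hpow : a ^ n = b ^ n) :
    a = b := by
  have hcomm : Commute a b⁻¹ := hab a ha b⁻¹ (inv_mem hb)
  have hdiv : (a * b⁻¹) ^ n = 1 := by rw [hcomm.mul_pow, hpow, inv_pow, mul_inv_cancel]
  exact mul_inv_eq_one.mp (htf _ (mul_mem ha (inv_mem hb)) n hn hdiv)

theorem Subgroup.commute_of_commute_pow {K : Subgroup G}
    (hab : ∀ a ∈ K, ∀ b ∈ K, Commute a b) (htf : ∀ k ∈ K, ∀ n : ℕ, 0 < n → k ^ n = 1 → k = 1)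
    {t h : G} (hh : h ∈ K) (hconj : t * h * t⁻¹ ∈ K) {n : ℕ} (hn : 0 < n)
    (hpow : h ^ n * t = t * h ^ n) : Commute t h := by
  have hconj_pow : (t * h * t⁻¹) ^ n = h ^ n := by rw [conj_pow, ← hpow, mul_inv_cancel_right]
  have hconj_eq : t * h * t⁻¹ = h := K.eq_of_pow_eq_of_torsionFree hab htf hconj hh hn hconj_pow
  exact mul_inv_eq_iff_eq_mul.mp hconj_eq

theorem commute_of_mem_closure_pair {t h₁ h₂ k : G} (ht₁ : Commute t h₁) (ht₂ : Commute t h₂)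
    (hk : k ∈ Subgroup.closure {h₁, h₂}) : Commute t k := by
  have hle : Subgroup.closure {h₁, h₂} ≤ Subgroup.centralizer {t} := by
    rw [Subgroup.closure_le, Set.insert_subset_iff, Set.singleton_subset_iff]
    simp only [SetLike.mem_coe, Subgroup.mem_centralizer_singleton_iff]
    exact ⟨ht₁.eq.symm, ht₂.eq.symm⟩
  exact (Subgroup.mem_centralizer_singleton_iff.mp (hle hk)).symm

theorem zpow_add_mul_mul_of_commute {t k l : G} (a b : ℤ) (hk : Commute t k) :
    t ^ (a + b) * (k * l) = t ^ a * k * (t ^ b * l) := by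
  rw [zpow_add, mul_assoc, ← mul_assoc (t ^ b), (hk.zpow_left b).eq]
  group

variable (u : G →* Multiplicative ℤ) {t : G}

theorem injective_zpow_mul_ker (ht : u t = Multiplicative.ofAdd 1) :
    Function.Injective (fun p : ℤ × u.ker => t ^ p.1 * (p.2 : G)) := by
  rintro ⟨a, k⟩ ⟨b, l⟩ heq
  have hu : u (t ^ a * k) = u (t ^ b * l) := congrArg u heq
  simp only [map_mul, map_zpow, ht, MonoidHom.mem_ker.mp k.2, MonoidHom.mem_ker.mp l.2,
    mul_one, ← Int.ofAdd_mul, one_mul, EmbeddingLike.apply_eq_iff_eq] at hu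
  subst hu
  exact Prod.ext rfl (Subtype.ext (mul_left_cancel heq))

theorem surjective_zpow_mul_ker (ht : u t = Multiplicative.ofAdd 1) :
    Function.Surjective (fun p : ℤ × u.ker => t ^ p.1 * (p.2 : G)) := by
  intro g
  set n : ℤ := (u g).toAdd
  have hk : t ^ (-n) * g ∈ u.ker := by
    rw [MonoidHom.mem_ker, map_mul, map_zpow, ht, ← Int.ofAdd_mul, one_mul, ofAdd_neg]
    exact inv_mul_cancel (u g)
  exact ⟨(n, ⟨_, hk⟩), by simp only [← mul_assoc, ← zpow_add, add_neg_cancel, zpow_zero, one_mul]⟩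

end Extension

theorem stmt5_general {G : Type*} [Group G] (u : G →* Multiplicative ℤ)
    (h₁ h₂ : G) (hh₁ : h₁ ∈ u.ker) (hh₂ : h₂ ∈ u.ker)
    (hgen : u.ker = Subgroup.closure {h₁, h₂})
    (hab : ∀ a ∈ u.ker, ∀ b ∈ u.ker, Commute a b)
    (htf : ∀ k ∈ u.ker, ∀ n : ℕ, 0 < n → k ^ n = 1 → k = 1)
    (t : G) (m : ℕ) (hm : 0 < m)
    (hm1 : h₁ ^ m * t = t * h₁ ^ m)
    (hker1 : t * h₁ * t⁻¹ ∈ u.ker) :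
    Commute t h₁ ∧
    (∀ m₂ : ℕ, 0 < m₂ → h₂ ^ m₂ * t = t * h₂ ^ m₂ → t * h₂ * t⁻¹ ∈ u.ker →
      u t = Multiplicative.ofAdd 1 →
      (∀ k ∈ u.ker, Commute t k) ∧
      (Function.Bijective (fun p : ℤ × u.ker => t ^ p.1 * (p.2 : G)) ∧
        ∀ p q : ℤ × u.ker,
          t ^ (p.1 + q.1) * ((p.2 * q.2 : u.ker) : G) =
            (t ^ p.1 * (p.2 : G)) * (t ^ q.1 * (q.2 : G)))) := by
  have ht₁ : Commute t h₁ := u.ker.commute_of_commute_pow hab htf hh₁ hker1 hm hm1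
  refine ⟨ht₁, fun m₂ hm₂ hm2 hker2 hut => ?_⟩
  have ht₂ : Commute t h₂ := u.ker.commute_of_commute_pow hab htf hh₂ hker2 hm₂ hm2
  have hcent : ∀ k ∈ u.ker, Commute t k := fun k hk =>
    commute_of_mem_closure_pair ht₁ ht₂ (hgen ▸ hk)
  refine ⟨hcent, ⟨injective_zpow_mul_ker u hut, surjective_zpow_mul_ker u hut⟩,
    fun p q => zpow_add_mul_mul_of_commute p.1 q.1 (hcent _ p.2.2)⟩

/-- Let `1 → ℤ² → G → ℤ → 1` be an extension, where `ker u` is free abelian of rank 2,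
generated by commuting elements `h₁, h₂`, and torsion-free. If `t ∈ G` commutes with
`h₁ ^ m` for some `m > 0` and `t h₁ t⁻¹ ∈ ker u`, then `t` commutes with `h₁`.
Consequently, if the same holds for `h₂` and `u t = 1`, then `t` centralizes `ker u`
and `(n, h) ↦ tⁿ h` is a group isomorphism `ℤ × ℤ² ≃ G`. -/
theorem stmt5 {G : Type*} [Group G] (u : G →* Multiplicative ℤ)
    (hu : Function.Surjective u)
    (h₁ h₂ : G) (hh₁ : h₁ ∈ u.ker) (hh₂ : h₂ ∈ u.ker)
    (hcomm : Commute h₁ h₂)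
    (hgen : u.ker = Subgroup.closure {h₁, h₂})
    (hab : ∀ a ∈ u.ker, ∀ b ∈ u.ker, Commute a b)
    (htf : ∀ k ∈ u.ker, ∀ n : ℕ, 0 < n → k ^ n = 1 → k = 1)
    (t : G) (m : ℕ) (hm : 0 < m)
    (hm1 : h₁ ^ m * t = t * h₁ ^ m)
    (hker1 : t * h₁ * t⁻¹ ∈ u.ker) :
    Commute t h₁ ∧
    (∀ m₂ : ℕ, 0 < m₂ → h₂ ^ m₂ * t = t * h₂ ^ m₂ → t * h₂ * t⁻¹ ∈ u.ker →
      u t = Multiplicative.ofAdd 1 →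
      (∀ k ∈ u.ker, Commute t k) ∧
      (Function.Bijective (fun p : ℤ × u.ker => t ^ p.1 * (p.2 : G)) ∧
        ∀ p q : ℤ × u.ker,
          t ^ (p.1 + q.1) * ((p.2 * q.2 : u.ker) : G) =
            (t ^ p.1 * (p.2 : G)) * (t ^ q.1 * (q.2 : G)))) :=
  stmt5_general u h₁ h₂ hh₁ hh₂ hgen hab htf t m hm hm1 hker1
end

section
/- Let R be a ring and C• a finitely generated free acyclic chain complex over R. Then the identity map of C• is chain homotopic to zero. -/
/-!
Reindexing by `n ↦ -n` turns a bounded below chain complex of projectives into a bounded above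
cochain complex of projectives, which is K-projective: every map from it to an acyclic complex,
in particular its identity when it is itself acyclic, is null-homotopic.
-/

open CategoryTheory Limits

namespace ChainComplex

variable {C : Type*} [Category* C] [Abelian C]

lemma nonempty_homotopy_zero_of_projective {K L : ChainComplex C ℤ} [∀ n, Projective (K.X n)]
    (d : ℤ) (hK : ∀ n < d, IsZero (K.X n)) (hL : ∀ n, L.ExactAt n) (f : K ⟶ L) :
    Nonempty (Homotopy f 0) := by
  let e := ComplexShape.embeddingDownIntUpInt
  have : CochainComplex.IsStrictlyLE (K.extend e) (-d) := by
    rw [CochainComplex.isStrictlyLE_iff]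
    exact fun n hn => (hK (-n) (by omega)).of_iso (K.extendXIso e (neg_neg n))
  have := CochainComplex.isKProjective_of_projective (K.extend e) (-d)
  have hL' : (L.extend e).Acyclic := fun n =>
    (L.extend_exactAt_iff e (j := -n) (neg_neg n)).2 (hL _)
  obtain ⟨h⟩ := CochainComplex.IsKProjective.nonempty_homotopy_zero
    (HomologicalComplex.extendMap f e) hL'
  exact ⟨Homotopy.ofExtend (h.trans (.ofEq (HomologicalComplex.extendMap_zero _ _ e).symm))⟩

end ChainComplex

theorem stmt11_general {R : Type} [Ring R] (C : ChainComplex (ModuleCat R) ℤ)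
    (hfree : ∀ i : ℤ, Module.Free R (C.X i))
    (hbdd : ∃ N : ℕ, ∀ i : ℤ, (N : ℤ) < |i| → Limits.IsZero (C.X i))
    (hacyclic : ∀ i : ℤ, C.ExactAt i) :
    Nonempty (Homotopy (𝟙 C) 0) := by
  obtain ⟨N, hN⟩ := hbdd
  have (i : ℤ) : Projective (C.X i) :=
    ModuleCat.projective_of_free (Module.Free.chooseBasis R (C.X i))
  exact ChainComplex.nonempty_homotopy_zero_of_projective (-N)
    (fun i hi => hN i (by rw [abs_of_neg (by omega)]; omega)) hacyclic (𝟙 C)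

/-- A bounded, finitely generated, free, acyclic chain complex over a ring `R`
has identity chain homotopic to zero. -/
theorem stmt11 {R : Type} [Ring R] (C : ChainComplex (ModuleCat R) ℤ)
    (hfree : ∀ i : ℤ, Module.Free R (C.X i))
    (hfin : ∀ i : ℤ, Module.Finite R (C.X i))
    (hbdd : ∃ N : ℕ, ∀ i : ℤ, (N : ℤ) < |i| → Limits.IsZero (C.X i))
    (hacyclic : ∀ i : ℤ, C.ExactAt i) :
    Nonempty (Homotopy (𝟙 C) 0) :=
  stmt11_general C hfree hbdd hacyclic
end

section
/- Let G be a group whose abelianization has positive rank (Hom(G,ℤ) ≠ 0) and suppose G = G₁ * G₂ is a nontrivial free product with Hom(Gᵢ,ℤ) ≠ 0 for i = 1,2. Then G has no finite-index subgroup with nontrivial center. -/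
/-!
Let `z ≠ 1` be central in a finite-index subgroup of `G₁ ∗ G₂`. Its centralizer then has finite
index, so it contains positive powers `aᵐ ∈ G₁` and `bⁿ ∈ G₂` of elements on which the given maps
to `ℤ` are nonzero; these powers are nontrivial since `ℤ` is torsion-free. In a free product the
centralizer of a nontrivial element `c` of a factor lies in that factor: conjugating `c` by a
reduced word that does not start in that factor gives the reduced word `w⁻¹ c w`, of length at
least three. Hence `z ∈ G₁ ∩ G₂ = 1`.
-/

open Monoid

namespace Monoid.CoprodI

variable {ι : Type*}

theorem Word.equiv_prod {M : ι → Type*} [∀ i, Monoid (M i)] [DecidableEq ι]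
    [∀ i, DecidableEq (M i)] (w : Word M) : Word.equiv w.prod = w :=
  Word.equiv.apply_symm_apply w

namespace NeWord

variable {M : ι → Type*} [∀ i, Monoid (M i)]

theorem prod_ne_of {i j k : ι} (w : NeWord M i j) (hw : 1 < w.toList.length) (m : M k) :
    w.prod ≠ of m := by
  classical
  intro h
  have hlen := congrArg (fun x => (Word.equiv x).toList.length) h
  simp only [prod, Word.equiv_prod] at hlen
  by_cases hm : m = 1
  · subst hm
    rw [map_one, ← Word.prod_empty, Word.equiv_prod] at hlen
    simp only [Word.empty, List.length_nil, List.length_eq_zero_iff] at hlen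
    exact w.toList_ne_nil hlen
  · rw [← prod_singleton m hm, prod, Word.equiv_prod] at hlen
    simp [toWord] at hlen
    omega

theorem inv_prod_mul_of_mul_prod_ne_of {G : ι → Type*} [∀ i, Group (G i)] {i j k : ι}
    (w : NeWord G i j) (hik : i ≠ k) {c : G k} (hc : c ≠ 1) (d : G k) :
    w.prod⁻¹ * of c * w.prod ≠ of d := by
  let conj := (w.inv.append hik (singleton c hc)).append hik.symm w
  have hlen : 1 < conj.toList.length := by
    have := List.length_pos_of_ne_nil w.toList_ne_nil
    simp [conj]
    omega
  simpa [conj] using conj.prod_ne_of hlen d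

end NeWord

theorem mem_range_of_of_commute {G : ι → Type*} [∀ i, Group (G i)] {i : ι} {c : G i}
    (hc : c ≠ 1) {z : CoprodI G} (h : Commute z (of c)) : z ∈ (of : G i →* CoprodI G).range := by
  classical
  set p := Word.equivPair i (Word.equiv z⁻¹)
  have hz : z⁻¹ = of p.head * p.tail.prod := by
    calc z⁻¹ = (Word.equiv z⁻¹).prod := (Word.equiv.symm_apply_apply _).symm
      _ = (Word.rcons p).prod := by rw [← Word.equivPair_symm, Equiv.symm_apply_apply]
      _ = of p.head * p.tail.prod := Word.prod_rcons p
  by_cases ht : p.tail = Word.empty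
  · refine ⟨p.head⁻¹, ?_⟩
    rw [map_inv, ← inv_inv z, hz, ht, Word.prod_empty, mul_one]
  obtain ⟨k, l, w, hw⟩ := NeWord.of_word p.tail ht
  have hk : k ≠ i := by
    rintro rfl
    apply p.fstIdx_ne
    simp [← hw, Word.fstIdx, NeWord.toWord]
  refine absurd ?_ (w.inv_prod_mul_of_mul_prod_ne_of hk (c := p.head⁻¹ * c * p.head)
    (by rwa [Ne, mul_assoc, inv_mul_eq_one, right_eq_mul]) c)
  have hwz : w.prod = of p.head⁻¹ * z⁻¹ := by
    rw [hz, NeWord.prod, hw, map_inv, inv_mul_cancel_left]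
  rw [hwz, map_mul, map_mul, map_inv]
  simpa [mul_assoc] using h.mul_inv_cancel

theorem eq_one_of_commute_of_commute {G : ι → Type*} [∀ i, Group (G i)] {i j : ι} (hij : i ≠ j)
    {a : G i} (ha : a ≠ 1) {b : G j} (hb : b ≠ 1) {z : CoprodI G} (h₁ : Commute z (of a))
    (h₂ : Commute z (of b)) : z = 1 := by
  classical
  obtain ⟨u, rfl⟩ := mem_range_of_of_commute ha h₁
  obtain ⟨v, hv⟩ := mem_range_of_of_commute hb h₂
  have hu := congrArg (lift (Pi.mulSingle i (MonoidHom.id (G i)))) hv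
  rw [lift_of, lift_of, Pi.mulSingle_eq_same, Pi.mulSingle_eq_of_ne hij.symm,
    MonoidHom.one_apply, MonoidHom.id_apply] at hu
  rw [← hu, map_one]

end Monoid.CoprodI

namespace Monoid.Coprod

open CoprodI

variable {G₁ G₂ : Type*} [Group G₁] [Group G₂]

-- Embedding `G₁ ∗ G₂` into an indexed free product of its two factor subgroups keeps the
-- family in a single universe.
def factor (b : Bool) : Subgroup (G₁ ∗ G₂) :=
  cond b inl.range inr.range

def toCoprodI : G₁ ∗ G₂ →* CoprodI (fun b => factor (G₁ := G₁) (G₂ := G₂) b) :=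
  lift ((of (i := true)).comp (inl : G₁ →* G₁ ∗ G₂).rangeRestrict)
    ((of (i := false)).comp (inr : G₂ →* G₁ ∗ G₂).rangeRestrict)

theorem toCoprodI_inl (a : G₁) :
    toCoprodI (inl a : G₁ ∗ G₂) = of (i := true) ((inl : G₁ →* G₁ ∗ G₂).rangeRestrict a) :=
  rfl

theorem toCoprodI_inr (b : G₂) :
    toCoprodI (inr b : G₁ ∗ G₂) = of (i := false) ((inr : G₂ →* G₁ ∗ G₂).rangeRestrict b) :=
  rfl

theorem toCoprodI_injective : Function.Injective (toCoprodI : G₁ ∗ G₂ →* _) := by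
  have : (CoprodI.lift fun b => (factor b).subtype).comp toCoprodI = .id (G₁ ∗ G₂) :=
    hom_ext rfl rfl
  exact Function.LeftInverse.injective (DFunLike.congr_fun this)

theorem eq_one_of_commute_inl_of_commute_inr {a : G₁} (ha : a ≠ 1) {b : G₂} (hb : b ≠ 1)
    {z : G₁ ∗ G₂} (h₁ : Commute z (inl a)) (h₂ : Commute z (inr b)) : z = 1 := by
  have ha' : (inl : G₁ →* G₁ ∗ G₂).rangeRestrict a ≠ 1 :=
    (MonoidHom.rangeRestrict_injective_iff.mpr inl_injective).ne_iff' (map_one _) |>.mpr ha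
  have hb' : (inr : G₂ →* G₁ ∗ G₂).rangeRestrict b ≠ 1 :=
    (MonoidHom.rangeRestrict_injective_iff.mpr inr_injective).ne_iff' (map_one _) |>.mpr hb
  have h₁' := h₁.map toCoprodI
  have h₂' := h₂.map toCoprodI
  rw [toCoprodI_inl] at h₁'
  rw [toCoprodI_inr] at h₂'
  exact (toCoprodI_injective.eq_iff' (map_one _)).mp <|
    eq_one_of_commute_of_commute (by decide) ha' hb' h₁' h₂'

end Monoid.Coprod

theorem not_isOfFinOrder_of_map_ne_one {G M : Type*} [Monoid G] [Monoid M] [IsMulTorsionFree M]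
    (f : G →* M) {g : G} (h : f g ≠ 1) : ¬IsOfFinOrder g :=
  fun hg => h (f.isOfFinOrder hg).eq_one'

namespace Subgroup

variable {G : Type*} [Group G]

theorem le_centralizer_of_mem_center {H : Subgroup G} {z : H} (hz : z ∈ center H) :
    H ≤ centralizer {(z : G)} := fun g hg =>
  mem_centralizer_singleton_iff.mpr (congrArg Subtype.val (mem_center_iff.mp hz ⟨g, hg⟩))

theorem exists_pow_mem_ne_one (K : Subgroup G) [K.FiniteIndex] {g : G} (hg : ¬IsOfFinOrder g) :
    ∃ n : ℕ, g ^ n ∈ K ∧ g ^ n ≠ 1 := by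
  obtain ⟨n, hn, -, hgn⟩ := K.exists_pow_mem_of_index_ne_zero FiniteIndex.index_ne_zero g
  exact ⟨n, hgn, fun h => hg (isOfFinOrder_iff_pow_eq_one.mpr ⟨n, hn, h⟩)⟩

end Subgroup

theorem stmt18_general {G₁ G₂ : Type*} [Group G₁] [Group G₂]
    (φ₁ : G₁ →* Multiplicative ℤ) (hφ₁ : φ₁ ≠ 1)
    (φ₂ : G₂ →* Multiplicative ℤ) (hφ₂ : φ₂ ≠ 1) :
    ¬ ∃ H : Subgroup (Monoid.Coprod G₁ G₂), H.FiniteIndex ∧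
        ∃ z : H, z ∈ Subgroup.center H ∧ z ≠ 1 := by
  rintro ⟨H, hH, z, hz, hz1⟩
  obtain ⟨a, ha⟩ := DFunLike.ne_iff.mp hφ₁
  obtain ⟨b, hb⟩ := DFunLike.ne_iff.mp hφ₂
  let C := Subgroup.centralizer {(z : Monoid.Coprod G₁ G₂)}
  have : C.FiniteIndex := Subgroup.finiteIndex_of_le (Subgroup.le_centralizer_of_mem_center hz)
  obtain ⟨m, hmC, hm⟩ := C.exists_pow_mem_ne_one
    (not_isOfFinOrder_of_map_ne_one (φ₁.comp Coprod.fst) (g := Coprod.inl a) ha)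
  obtain ⟨n, hnC, hn⟩ := C.exists_pow_mem_ne_one
    (not_isOfFinOrder_of_map_ne_one (φ₂.comp Coprod.snd) (g := Coprod.inr b) hb)
  rw [← map_pow] at hmC hm hnC hn
  exact hz1 <| Subtype.ext <| Coprod.eq_one_of_commute_inl_of_commute_inr
    (fun h => hm (by rw [h, map_one])) (fun h => hn (by rw [h, map_one]))
    (Subgroup.mem_centralizer_singleton_iff.mp hmC).symm
    (Subgroup.mem_centralizer_singleton_iff.mp hnC).symm

/-- A nontrivial free product `G = G₁ ∗ G₂`, whose factors each admit a nonzero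
homomorphism to `ℤ` (so that `Hom(G, ℤ) ≠ 0` as well), has no finite-index subgroup
with nontrivial center. -/
theorem stmt18 {G₁ G₂ : Type*} [Group G₁] [Group G₂]
    [Nontrivial G₁] [Nontrivial G₂]
    (φ₁ : G₁ →* Multiplicative ℤ) (hφ₁ : φ₁ ≠ 1)
    (φ₂ : G₂ →* Multiplicative ℤ) (hφ₂ : φ₂ ≠ 1)
    (φ : Monoid.Coprod G₁ G₂ →* Multiplicative ℤ) (hφ : φ ≠ 1) :
    ¬ ∃ H : Subgroup (Monoid.Coprod G₁ G₂), H.FiniteIndex ∧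
        ∃ z : H, z ∈ Subgroup.center H ∧ z ≠ 1 :=
  stmt18_general φ₁ hφ₁ φ₂ hφ₂
end
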